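/- arXiv:2409.01167 — 5 statements merged into one kernel-verified Lean document; each statement's English description precedes it below -/
import Mathlib

section
/- Let X be an infinite dimensional separable complex Banach space, T a quasinilpotent bounded linear operator on X, and n ≥ 1 a natural number. The following are equivalent: (i) T has a nontrivial closed invariant subspace; (ii) (T − λI)^n has a nontrivial closed invariant subspace for every λ ∈ ℂ; (iii) (T − λI)^n has a nontrivial closed invariant subspace for some λ ∈ ℂ \ {0}. -/
/-!
Only (iii) ⇒ (i) has content. Let `S = (T - λ)ⁿ` with `λ ≠ 0`. In the commutative Banach algebra
generated by `T` every character kills `T` (the spectrum of `T` is still `{0}` there, as `ℂ \ {0}`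
is connected), so `y = 1 - λ⁻¹ T` and `k = yⁿ - 1 = (-λ)⁻ⁿ S - 1` have character values `1` and
`0`. Hence `k` is quasinilpotent and the binomial series
`x = (1 + k) ^ (1 / n)` converges in the closed algebra generated by `S`, with `xⁿ = 1 + k = yⁿ`.
All characters take the value `n` at `∑ xⁱ yⁿ⁻¹⁻ⁱ`, so this factor of `xⁿ - yⁿ` is invertible and
`x = y`. Thus `T = λ (1 - x)` lies in the closed algebra generated by `S`, and every closed
`S`-invariant subspace is `T`-invariant.
-/

/-- `T` has a nontrivial closed invariant subspace. -/
def HasNontrivialClosedInvariantSubspace {E : Type*} [NormedAddCommGroup E]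
    [NormedSpace ℂ E] (T : E →L[ℂ] E) : Prop :=
  ∃ M : Submodule ℂ E, IsClosed (M : Set E) ∧ M ≠ ⊥ ∧ M ≠ ⊤ ∧ ∀ x ∈ M, T x ∈ M

open Filter WeakDual

section BinomialSeries

variable {A : Type*} [NormedRing A] [NormedAlgebra ℂ A]

/-- `(1 + k) ^ β`, as the binomial series. -/
noncomputable def binomialSum (k : A) (β : ℂ) : A :=
  ∑' m, Ring.choose β m • k ^ m

lemma binomialSum_zero_right (k : A) : binomialSum k 0 = 1 := by
  rw [binomialSum, tsum_eq_single 0 fun m hm ↦ by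
    rw [Ring.choose_zero_pos ℂ (Nat.pos_of_ne_zero hm), zero_smul]]
  simp

lemma binomialSum_one_right (k : A) : binomialSum k 1 = 1 + k := by
  rw [binomialSum, tsum_eq_sum (s := Finset.range 2) fun m hm ↦ by
    rw [← Nat.cast_one, Ring.choose_natCast, Nat.choose_eq_zero_of_lt (by simpa using hm),
      Nat.cast_zero, zero_smul]]
  simp [Finset.sum_range_succ]

variable [CompleteSpace A]

lemma summable_norm_smul_pow_of_spectralRadius_eq_zero {k : A} (hk : spectralRadius ℂ k = 0)
    {c : ℕ → ℂ} {r : ℝ} (hr : 0 < r) (hc : Summable fun m ↦ ‖c m‖ * r ^ m) :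
    Summable fun m ↦ ‖c m • k ^ m‖ := by
  have hroot := spectrum.pow_norm_pow_one_div_tendsto_nhds_spectralRadius k
  rw [hk] at hroot
  have hpow : ∀ᶠ m : ℕ in atTop, ‖k ^ m‖ ≤ r ^ m := by
    filter_upwards [hroot.eventually_lt_const (ENNReal.ofReal_pos.2 hr), eventually_ne_atTop 0]
      with m hm hm0
    calc ‖k ^ m‖ = (‖k ^ m‖ ^ (1 / m : ℝ)) ^ m := by
          rw [one_div, Real.rpow_inv_natCast_pow (norm_nonneg _) hm0]
      _ ≤ r ^ m := pow_le_pow_left₀ (by positivity) ((ENNReal.ofReal_lt_ofReal_iff hr).1 hm).le m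
  refine Summable.of_norm_bounded_eventually_nat hc ?_
  filter_upwards [hpow] with m hm
  rw [norm_norm]
  exact (norm_smul_le _ _).trans (mul_le_mul_of_nonneg_left hm (norm_nonneg _))

lemma summable_norm_choose_mul_pow (β : ℂ) :
    Summable fun m ↦ ‖Ring.choose β m‖ * (1 / 2 : ℝ) ^ m := by
  have h := (binomialSeries ℂ β).summable_norm_mul_pow (r := 1 / 2)
    ((by norm_num : ((1 / 2 : NNReal) : ENNReal) < 1).trans_le binomialSeries_radius_ge_one)
  simpa [binomialSeries, FormalMultilinearSeries.ofScalars_norm] using h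

variable {k : A}

lemma summable_norm_choose_smul_pow (hk : spectralRadius ℂ k = 0) (β : ℂ) :
    Summable fun m ↦ ‖Ring.choose β m • k ^ m‖ :=
  summable_norm_smul_pow_of_spectralRadius_eq_zero hk (by norm_num)
    (summable_norm_choose_mul_pow β)

lemma hasSum_binomialSum (hk : spectralRadius ℂ k = 0) (β : ℂ) :
    HasSum (fun m ↦ Ring.choose β m • k ^ m) (binomialSum k β) :=
  (summable_norm_choose_smul_pow hk β).of_norm.hasSum

lemma binomialSum_mem_elemental (hk : spectralRadius ℂ k = 0) (β : ℂ) :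
    binomialSum k β ∈ Algebra.elemental ℂ k :=
  (Algebra.elemental.isClosed ℂ k).mem_of_tendsto (hasSum_binomialSum hk β).tendsto_sum_nat
    (Eventually.of_forall fun _ ↦ Subalgebra.sum_mem _ fun m _ ↦
      Subalgebra.smul_mem _ (Subalgebra.pow_mem _ (Algebra.elemental.self_mem ℂ k) m) _)

lemma binomialSum_mul (hk : spectralRadius ℂ k = 0) (β γ : ℂ) :
    binomialSum k β * binomialSum k γ = binomialSum k (β + γ) := by
  rw [binomialSum, binomialSum, tsum_mul_tsum_eq_tsum_sum_antidiagonal_of_summable_norm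
    (summable_norm_choose_smul_pow hk β) (summable_norm_choose_smul_pow hk γ)]
  refine tsum_congr fun m ↦ ?_
  rw [Ring.add_choose_eq m (Commute.all β γ), Finset.sum_smul]
  refine Finset.sum_congr rfl fun ij hij ↦ ?_
  rw [← Finset.HasAntidiagonal.mem_antidiagonal.1 hij, pow_add, smul_mul_smul_comm]

lemma binomialSum_pow (hk : spectralRadius ℂ k = 0) (β : ℂ) (N : ℕ) :
    binomialSum k β ^ N = binomialSum k (N * β) := by
  induction N with
  | zero => simp [binomialSum_zero_right]
  | succ N ih => rw [pow_succ, ih, binomialSum_mul hk]; push_cast; ring_nf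

lemma binomialSum_inv_pow (hk : spectralRadius ℂ k = 0) {n : ℕ} (hn : n ≠ 0) :
    binomialSum k (n : ℂ)⁻¹ ^ n = 1 + k := by
  rw [binomialSum_pow hk, mul_inv_cancel₀ (Nat.cast_ne_zero.2 hn), binomialSum_one_right]

end BinomialSeries

section Commutative

variable {B : Type*} [NormedCommRing B] [NormedAlgebra ℂ B] [CompleteSpace B]

lemma spectralRadius_eq_zero_of_forall_character_eq_zero {k : B}
    (hk : ∀ φ : characterSpace ℂ B, φ k = 0) : spectralRadius ℂ k = 0 := by
  refine le_antisymm (iSup₂_le fun z hz ↦ ?_) bot_le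
  obtain ⟨φ, rfl⟩ := CharacterSpace.mem_spectrum_iff_exists.1 hz
  simp [hk φ]

lemma map_binomialSum {k : B} (hk : spectralRadius ℂ k = 0) {φ : characterSpace ℂ B}
    (hφ : φ k = 0) (β : ℂ) : φ (binomialSum k β) = 1 := by
  have h := (hasSum_binomialSum hk β).map φ (map_continuous φ)
  refine h.unique ?_
  convert hasSum_ite_eq 0 (1 : ℂ) with m
  rcases eq_or_ne m 0 with rfl | hm
  · simp
  · simp [hφ, hm]

lemma eq_of_pow_eq_pow_of_forall_character_eq_one {x y : B} {n : ℕ} (hn : n ≠ 0)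
    (hx : ∀ φ : characterSpace ℂ B, φ x = 1) (hy : ∀ φ : characterSpace ℂ B, φ y = 1)
    (hxy : x ^ n = y ^ n) : x = y := by
  set z := ∑ i ∈ Finset.range n, x ^ i * y ^ (n - 1 - i)
  have hz : IsUnit z := by
    by_contra hz
    obtain ⟨φ, hφ⟩ := CharacterSpace.exists_apply_eq_zero hz
    simp [z, hx, hy, hn] at hφ
  rw [← sub_eq_zero, ← hz.mul_right_eq_zero, geom_sum₂_mul, hxy, sub_self]

theorem mem_elemental_pow_sub_smul_one_of_forall_character_eq_zero {a : B}
    (ha : ∀ φ : characterSpace ℂ B, φ a = 0) {lam : ℂ} (hlam : lam ≠ 0) {n : ℕ} (hn : n ≠ 0) :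
    a ∈ Algebra.elemental ℂ ((a - lam • 1) ^ n) := by
  set y : B := 1 - lam⁻¹ • a
  set k : B := y ^ n - 1
  have hφy : ∀ φ : characterSpace ℂ B, φ y = 1 := fun φ ↦ by simp [y, ha]
  have hφk : ∀ φ : characterSpace ℂ B, φ k = 0 := fun φ ↦ by simp [k, hφy]
  have hk := spectralRadius_eq_zero_of_forall_character_eq_zero hφk
  have hroot : binomialSum k (n : ℂ)⁻¹ = y :=
    eq_of_pow_eq_pow_of_forall_character_eq_one hn (fun φ ↦ map_binomialSum hk (hφk φ) _) hφy
      (by rw [binomialSum_inv_pow hk hn, add_sub_cancel])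
  have hy : y = (-lam⁻¹) • (a - lam • 1) := by
    rw [show y = 1 - lam⁻¹ • a from rfl, smul_sub, smul_smul, neg_mul, inv_mul_cancel₀ hlam,
      neg_smul, neg_smul, one_smul]
    abel
  have hk_mem : k ∈ Algebra.elemental ℂ ((a - lam • 1) ^ n) := by
    rw [show k = (-lam⁻¹) ^ n • (a - lam • 1) ^ n - 1 by rw [← smul_pow, ← hy]]
    exact sub_mem (Subalgebra.smul_mem _ (Algebra.elemental.self_mem ℂ _) _) (one_mem _)
  have hy_mem : y ∈ Algebra.elemental ℂ ((a - lam • 1) ^ n) :=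
    hroot ▸ Algebra.elemental.le_of_mem (Algebra.elemental.isClosed ℂ _) hk_mem
      (binomialSum_mem_elemental hk _)
  have ha_eq : a = lam • (1 - y) := by simp [y, smul_smul, hlam]
  have h := Subalgebra.smul_mem _ (sub_mem (one_mem _) hy_mem) lam
  rwa [← ha_eq] at h

end Commutative

section Elemental

variable {A : Type*} [NormedRing A] [NormedAlgebra ℂ A] [CompleteSpace A]

noncomputable instance (a : A) : NormedCommRing (Algebra.elemental ℂ a) :=
  { SubringClass.toNormedRing (Algebra.elemental ℂ a) with mul_comm := mul_comm }

theorem mem_elemental_pow_sub_smul_one {a : A} (ha : spectrum ℂ a = {0}) {lam : ℂ}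
    (hlam : lam ≠ 0) {n : ℕ} (hn : n ≠ 0) : a ∈ Algebra.elemental ℂ ((a - lam • 1) ^ n) := by
  set a' : Algebra.elemental ℂ a := ⟨a, Algebra.elemental.self_mem ℂ a⟩
  have hspec : spectrum ℂ a' = {0} := by
    refine (Subalgebra.spectrum_eq_of_isPreconnected_compl _ a' ?_).trans ha
    rw [show spectrum ℂ (a' : A) = {0} from ha]
    exact (isConnected_compl_singleton_of_one_lt_rank (by simp) 0).isPreconnected
  have ha' : ∀ φ : characterSpace ℂ (Algebra.elemental ℂ a), φ a' = 0 := fun φ ↦ by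
    simpa [hspec] using AlgHom.apply_mem_spectrum φ a'
  have hle : Algebra.elemental ℂ ((a' - lam • 1) ^ n) ≤
      (Algebra.elemental ℂ ((a - lam • 1) ^ n)).comap (Algebra.elemental ℂ a).val :=
    Algebra.elemental.le_of_mem ((Algebra.elemental.isClosed ℂ _).preimage continuous_subtype_val)
      (Algebra.elemental.self_mem ℂ _)
  exact hle (mem_elemental_pow_sub_smul_one_of_forall_character_eq_zero ha' hlam hn)

end Elemental

section Invariant

variable {𝕜 E : Type*} [NontriviallyNormedField 𝕜] [NormedAddCommGroup E] [NormedSpace 𝕜 E]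

def Submodule.invtSubalgebra (M : Submodule 𝕜 E) : Subalgebra 𝕜 (E →L[𝕜] E) where
  carrier := {U | ∀ x ∈ M, U x ∈ M}
  mul_mem' hU hV x hx := hU _ (hV x hx)
  add_mem' hU hV x hx := M.add_mem (hU x hx) (hV x hx)
  algebraMap_mem' c _ hx := M.smul_mem c hx

lemma Submodule.isClosed_invtSubalgebra {M : Submodule 𝕜 E} (hM : IsClosed (M : Set E)) :
    IsClosed (M.invtSubalgebra : Set (E →L[𝕜] E)) := by
  have : (M.invtSubalgebra : Set (E →L[𝕜] E)) = ⋂ x ∈ M, (fun U : E →L[𝕜] E ↦ U x) ⁻¹' M := by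
    ext U
    simp only [Set.mem_iInter, Set.mem_preimage, SetLike.mem_coe]
    rfl
  rw [this]
  exact isClosed_biInter fun x _ ↦ hM.preimage (continuous_eval_const x)

end Invariant

theorem stmt_0_general {E : Type*} [NormedAddCommGroup E] [NormedSpace ℂ E] [CompleteSpace E]
    (T : E →L[ℂ] E) (hT : spectrum ℂ T = {0}) (n : ℕ) (hn : 1 ≤ n) :
    List.TFAE
      [HasNontrivialClosedInvariantSubspace T,
       ∀ lam : ℂ, HasNontrivialClosedInvariantSubspace ((T - lam • (1 : E →L[ℂ] E)) ^ n),
       ∃ lam : ℂ, lam ≠ 0 ∧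
         HasNontrivialClosedInvariantSubspace ((T - lam • (1 : E →L[ℂ] E)) ^ n)] := by
  tfae_have 1 → 2 := by
    rintro ⟨M, hM, hbot, htop, hTM⟩ lam
    exact ⟨M, hM, hbot, htop, pow_mem (M.invtSubalgebra.sub_mem hTM
      (M.invtSubalgebra.smul_mem M.invtSubalgebra.one_mem lam)) n⟩
  tfae_have 2 → 3 := fun h ↦ ⟨1, one_ne_zero, h 1⟩
  tfae_have 3 → 1 := by
    rintro ⟨lam, hlam, M, hM, hbot, htop, hSM⟩
    exact ⟨M, hM, hbot, htop, Algebra.elemental.le_of_mem (M.isClosed_invtSubalgebra hM) hSM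
      (mem_elemental_pow_sub_smul_one hT hlam (by omega))⟩
  tfae_finish

theorem stmt_0 {E : Type*} [NormedAddCommGroup E] [NormedSpace ℂ E] [CompleteSpace E]
    [TopologicalSpace.SeparableSpace E] (hdim : ¬ FiniteDimensional ℂ E)
    (T : E →L[ℂ] E) (hT : spectrum ℂ T = {0}) (n : ℕ) (hn : 1 ≤ n) :
    List.TFAE
      [HasNontrivialClosedInvariantSubspace T,
       ∀ lam : ℂ, HasNontrivialClosedInvariantSubspace ((T - lam • (1 : E →L[ℂ] E)) ^ n),
       ∃ lam : ℂ, lam ≠ 0 ∧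
         HasNontrivialClosedInvariantSubspace ((T - lam • (1 : E →L[ℂ] E)) ^ n)] :=
  stmt_0_general T hT n hn
end

section
/- Let X be an infinite dimensional separable complex Banach space, T a quasinilpotent bounded linear operator on X, n ≥ 1, and λ₀ ∈ ℂ \ {0}. If (T − λ₀I)^n has a nontrivial closed invariant subspace, then T has a nontrivial closed invariant subspace. -/
open Filter Finset
open scoped NNReal ENNReal

open Polynomial in
lemma Ring.norm_choose_le {𝕜 : Type*} [RCLike 𝕜] (r : 𝕜) (k : ℕ) :
    ‖Ring.choose r k‖ ≤ (1 + ‖r‖) ^ k := by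
  have hprod : ‖∏ j ∈ range k, (r - j)‖ ≤ (1 + ‖r‖) ^ k * k.factorial := by
    rw [norm_prod, ← prod_range_add_one_eq_factorial, Nat.cast_prod, pow_eq_prod_const,
      ← prod_mul_distrib]
    refine prod_le_prod (fun _ _ => norm_nonneg _) fun j _ => ?_
    calc ‖r - j‖ ≤ ‖r‖ + j := (norm_sub_le _ _).trans (by simp)
      _ ≤ (1 + ‖r‖) * ((j + 1 : ℕ) : ℝ) := by
        push_cast; nlinarith [norm_nonneg r, j.cast_nonneg (α := ℝ)]
  have hpoch : (descPochhammer ℤ k).smeval r = ∏ j ∈ range k, (r - j) := by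
    rw [← aeval_eq_smeval, aeval_def, ← eval_map, descPochhammer_map,
      descPochhammer_eval_eq_prod_range]
  rw [Ring.choose_eq_smul, hpoch, norm_smul, norm_inv, RCLike.norm_natCast,
    inv_mul_le_iff₀ (by exact_mod_cast k.factorial_pos), mul_comm]
  exact hprod

section ScalarModMul

variable {R 𝔸 : Type*} [CommSemiring R] [Semiring 𝔸] [Algebra R 𝔸] {t : 𝔸}

-- `x ≡ c` modulo the ideal `t Z(t)` of the centralizer `Z(t)` of `t`.
def IsScalarModMul (t : 𝔸) (c : R) (x : 𝔸) : Prop :=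
  ∃ y, Commute t y ∧ x = algebraMap R 𝔸 c + t * y

lemma isScalarModMul_algebraMap (t : 𝔸) (c : R) : IsScalarModMul t c (algebraMap R 𝔸 c) :=
  ⟨0, Commute.zero_right t, by simp⟩

namespace IsScalarModMul

lemma commute {c : R} {x : 𝔸} (hx : IsScalarModMul t c x) : Commute t x := by
  obtain ⟨y, hy, rfl⟩ := hx
  exact (Algebra.commute_algebraMap_right c t).add_right ((Commute.refl t).mul_right hy)

lemma add {c c' : R} {x x' : 𝔸} (hx : IsScalarModMul t c x) (hx' : IsScalarModMul t c' x') :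
    IsScalarModMul t (c + c') (x + x') := by
  obtain ⟨y, hy, rfl⟩ := hx
  obtain ⟨y', hy', rfl⟩ := hx'
  refine ⟨y + y', hy.add_right hy', ?_⟩
  rw [map_add, mul_add]
  abel

lemma mul {c c' : R} {x x' : 𝔸} (hx : IsScalarModMul t c x) (hx' : IsScalarModMul t c' x') :
    IsScalarModMul t (c * c') (x * x') := by
  obtain ⟨y, hy, rfl⟩ := hx
  obtain ⟨y', hy', rfl⟩ := hx'
  refine ⟨algebraMap R 𝔸 c * y' + algebraMap R 𝔸 c' * y + y * t * y', ?_, ?_⟩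
  · exact (((Algebra.commute_algebraMap_right c t).mul_right hy').add_right
      ((Algebra.commute_algebraMap_right c' t).mul_right hy)).add_right
      ((hy.mul_right (Commute.refl t)).mul_right hy')
  · simp only [add_mul, mul_add, map_mul, mul_assoc, Algebra.left_comm _ c, Algebra.left_comm _ c',
      ← Algebra.commutes c' y]
    abel

lemma pow {c : R} {x : 𝔸} (hx : IsScalarModMul t c x) (n : ℕ) :
    IsScalarModMul t (c ^ n) (x ^ n) := by
  induction n with
  | zero => simpa using isScalarModMul_algebraMap t (1 : R)
  | succ n ih => simpa only [pow_succ] using ih.mul hx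

lemma sum {ι : Type*} (s : Finset ι) {c : ι → R} {x : ι → 𝔸}
    (hx : ∀ i ∈ s, IsScalarModMul t (c i) (x i)) :
    IsScalarModMul t (∑ i ∈ s, c i) (∑ i ∈ s, x i) := by
  classical
  induction s using Finset.induction_on with
  | empty => simpa using isScalarModMul_algebraMap t (0 : R)
  | insert i s hi ih =>
    rw [sum_insert hi, sum_insert hi]
    exact (hx i (mem_insert_self i s)).add (ih fun j hj => hx j (mem_insert_of_mem hj))

lemma smul {c : R} {x : 𝔸} (hx : IsScalarModMul t c x) (a : R) :
    IsScalarModMul t (a * c) (a • x) := by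
  simpa [Algebra.smul_def] using (isScalarModMul_algebraMap t a).mul hx

end IsScalarModMul

end ScalarModMul

section BinomialSeries

variable {𝕂 𝔸 : Type*} [Field 𝕂] [CharZero 𝕂] [Ring 𝔸] [Algebra 𝕂 𝔸] [TopologicalSpace 𝔸]
  [IsTopologicalRing 𝔸]

lemma binomialSeries_sum_eq_tsum (r : 𝕂) (q : 𝔸) :
    (binomialSeries 𝔸 r).sum q = ∑' k, Ring.choose r k • q ^ k :=
  FormalMultilinearSeries.ofScalars_sum_eq _ _

lemma binomialSeries_zero_sum (q : 𝔸) : (binomialSeries 𝔸 (0 : 𝕂)).sum q = 1 := by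
  rw [binomialSeries_sum_eq_tsum, tsum_eq_single 0 fun k hk => by
    rw [Ring.choose_zero_pos 𝕂 (Nat.pos_of_ne_zero hk), zero_smul]]
  simp

lemma binomialSeries_one_sum (q : 𝔸) : (binomialSeries 𝔸 (1 : 𝕂)).sum q = 1 + q := by
  have hchoose (k : ℕ) : Ring.choose (1 : 𝕂) k = Nat.choose 1 k := by
    simpa using Ring.choose_natCast (R := 𝕂) 1 k
  rw [binomialSeries_sum_eq_tsum, tsum_eq_sum (s := range 2) fun k hk => by
    rw [hchoose, Nat.choose_eq_zero_of_lt (by simpa using hk), Nat.cast_zero, zero_smul]]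
  simp [sum_range_succ, hchoose]

lemma binomialSeries_sum_mem {S : Subalgebra 𝕂 𝔸} (hS : IsClosed (S : Set 𝔸)) {q : 𝔸}
    (hq : q ∈ S) (r : 𝕂) : (binomialSeries 𝔸 r).sum q ∈ S := by
  rw [binomialSeries_sum_eq_tsum]
  exact tsum_mem hS fun k => S.smul_mem (pow_mem hq k) _

end BinomialSeries

section Quasinilpotent

variable {𝔸 : Type*} [NormedRing 𝔸] [NormedAlgebra ℂ 𝔸]

lemma isUnit_algebraMap_add_of_spectralRadius_eq_zero {q : 𝔸} (hq : spectralRadius ℂ q = 0)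
    {c : ℂ} (hc : c ≠ 0) : IsUnit (algebraMap ℂ 𝔸 c + q) := by
  have := spectrum.mem_resolventSet_of_spectralRadius_lt (a := q) (k := -c) (by simpa [hq] using hc)
  simpa [sub_eq_add_neg, add_comm] using (spectrum.mem_resolventSet_iff.mp this).neg

variable [CompleteSpace 𝔸]

lemma Commute.spectralRadius_mul_eq_zero {a b : 𝔸} (hab : Commute a b)
    (ha : spectralRadius ℂ a = 0) : spectralRadius ℂ (a * b) = 0 := by
  have hlim := ENNReal.Tendsto.mul_const
    (spectrum.pow_nnnorm_pow_one_div_tendsto_nhds_spectralRadius a)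
    (b := (‖b‖₊ : ℝ≥0∞)) (Or.inr ENNReal.coe_ne_top)
  rw [ha, zero_mul] at hlim
  refine le_antisymm (le_of_tendsto_of_tendsto
    (spectrum.pow_nnnorm_pow_one_div_tendsto_nhds_spectralRadius (a * b)) hlim ?_) bot_le
  filter_upwards [eventually_ne_atTop 0] with k hk
  have hk' : (0 : ℝ) ≤ 1 / k := by positivity
  calc (‖(a * b) ^ k‖₊ : ℝ≥0∞) ^ (1 / k : ℝ)
      ≤ ((‖a ^ k‖₊ * ‖b‖₊ ^ k : ℝ≥0) : ℝ≥0∞) ^ (1 / k : ℝ) := by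
        gcongr
        rw [hab.mul_pow]
        exact (nnnorm_mul_le _ _).trans (by gcongr; exact nnnorm_pow_le' b (Nat.pos_of_ne_zero hk))
    _ = (‖a ^ k‖₊ : ℝ≥0∞) ^ (1 / k : ℝ) * ‖b‖₊ := by
        rw [ENNReal.coe_mul, ENNReal.mul_rpow_of_nonneg _ _ hk', ENNReal.coe_pow,
          ← ENNReal.rpow_natCast, ← ENNReal.rpow_mul, mul_one_div_cancel (by exact_mod_cast hk),
          ENNReal.rpow_one]

lemma eventually_norm_pow_le_of_spectralRadius_eq_zero {q : 𝔸} (hq : spectralRadius ℂ q = 0)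
    {ε : ℝ} (hε : 0 < ε) : ∀ᶠ k in atTop, ‖q ^ k‖ ≤ ε ^ k := by
  have hlim := spectrum.pow_nnnorm_pow_one_div_tendsto_nhds_spectralRadius q
  rw [hq] at hlim
  filter_upwards [hlim.eventually_lt_const (ENNReal.ofReal_pos.mpr hε),
    eventually_ne_atTop 0] with k hk hk0
  have hk' : ((‖q ^ k‖₊ : ℝ≥0∞) ^ (1 / k : ℝ)) ^ k = ‖q ^ k‖₊ := by
    rw [← ENNReal.rpow_natCast, ← ENNReal.rpow_mul, one_div_mul_cancel (by exact_mod_cast hk0),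
      ENNReal.rpow_one]
  have := pow_le_pow_left₀ zero_le hk.le k
  rwa [hk', ← ENNReal.ofReal_pow hε.le, ← ENNReal.ofReal_coe_nnreal, coe_nnnorm,
    ENNReal.ofReal_le_ofReal_iff (by positivity)] at this

lemma summable_norm_smul_pow_of_spectralRadius_eq_zero_s1 {q : 𝔸} (hq : spectralRadius ℂ q = 0)
    {c : ℕ → ℂ} {K₀ K : ℝ} (hc : ∀ k, ‖c k‖ ≤ K₀ * K ^ k) :
    Summable fun k => ‖c k • q ^ k‖ := by
  have hK₀ : 0 ≤ K₀ := by simpa using (norm_nonneg _).trans (hc 0)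
  set ε := (2 * (|K| + 1))⁻¹
  refine Summable.of_norm_bounded_eventually_nat
    (summable_geometric_two.mul_left K₀) ?_
  filter_upwards [eventually_norm_pow_le_of_spectralRadius_eq_zero hq (ε := ε) (by positivity)]
    with k hk
  rw [norm_norm, norm_smul]
  have hck : ‖c k‖ ≤ K₀ * |K| ^ k :=
    (hc k).trans (mul_le_mul_of_nonneg_left ((le_abs_self _).trans (abs_pow K k).le) hK₀)
  calc ‖c k‖ * ‖q ^ k‖ ≤ (K₀ * |K| ^ k) * ε ^ k := by gcongr
    _ = K₀ * (|K| * ε) ^ k := by ring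
    _ ≤ K₀ * (1 / 2) ^ k := by
        gcongr
        rw [mul_inv_le_iff₀ (by positivity)]
        linarith

end Quasinilpotent

section BanachAlgebra

variable {𝔸 : Type*} [NormedRing 𝔸] [NormedAlgebra ℂ 𝔸] [CompleteSpace 𝔸] {q t : 𝔸}

lemma summable_norm_choose_smul_pow_s1 (hq : spectralRadius ℂ q = 0) (r : ℂ) :
    Summable fun k => ‖Ring.choose r k • q ^ k‖ :=
  summable_norm_smul_pow_of_spectralRadius_eq_zero_s1 hq (K₀ := 1)
    fun k => (one_mul ((1 + ‖r‖) ^ k)).symm ▸ Ring.norm_choose_le r k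

lemma binomialSeries_sum_mul_sum (hq : spectralRadius ℂ q = 0) (r s : ℂ) :
    (binomialSeries 𝔸 r).sum q * (binomialSeries 𝔸 s).sum q = (binomialSeries 𝔸 (r + s)).sum q := by
  simp only [binomialSeries_sum_eq_tsum]
  rw [tsum_mul_tsum_eq_tsum_sum_antidiagonal_of_summable_norm
    (summable_norm_choose_smul_pow_s1 hq r) (summable_norm_choose_smul_pow_s1 hq s)]
  refine tsum_congr fun k => ?_
  rw [Ring.add_choose_eq k (Commute.all r s), sum_smul]
  refine sum_congr rfl fun ij hij => ?_
  rw [smul_mul_smul_comm, ← pow_add, mem_antidiagonal.mp hij]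

lemma binomialSeries_sum_pow (hq : spectralRadius ℂ q = 0) (r : ℂ) (m : ℕ) :
    ((binomialSeries 𝔸 r).sum q) ^ m = (binomialSeries 𝔸 (m * r)).sum q := by
  induction m with
  | zero => simp [binomialSeries_zero_sum]
  | succ m ih => rw [pow_succ, ih, binomialSeries_sum_mul_sum hq]; push_cast; ring_nf

lemma binomialSeries_inv_natCast_sum_pow (hq : spectralRadius ℂ q = 0) {n : ℕ} (hn : n ≠ 0) :
    ((binomialSeries 𝔸 (n : ℂ)⁻¹).sum q) ^ n = 1 + q := by
  rw [binomialSeries_sum_pow hq, mul_inv_cancel₀ (Nat.cast_ne_zero.mpr hn), binomialSeries_one_sum]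

lemma binomialSeries_sum_eq_one_add_mul (hq : spectralRadius ℂ q = 0) (r : ℂ) :
    (binomialSeries 𝔸 r).sum q = 1 + q * ∑' k, Ring.choose r (k + 1) • q ^ k := by
  have htail : Summable fun k => Ring.choose r (k + 1) • q ^ k :=
    (summable_norm_smul_pow_of_spectralRadius_eq_zero_s1 hq (K₀ := 1 + ‖r‖) (K := 1 + ‖r‖)
      fun k => by simpa [pow_succ'] using Ring.norm_choose_le r (k + 1)).of_norm
  rw [binomialSeries_sum_eq_tsum, (summable_norm_choose_smul_pow_s1 hq r).of_norm.tsum_eq_zero_add,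
    ← htail.tsum_mul_left]
  simp [pow_succ']

lemma IsScalarModMul.binomialSeries_sum (hq : IsScalarModMul t (0 : ℂ) q)
    (hq₀ : spectralRadius ℂ q = 0) (r : ℂ) :
    IsScalarModMul t (1 : ℂ) ((binomialSeries 𝔸 r).sum q) := by
  obtain ⟨w, hw, hqw⟩ := hq
  rw [map_zero, zero_add] at hqw
  have htq : Commute t q := hqw ▸ (Commute.refl t).mul_right hw
  refine ⟨w * ∑' k, Ring.choose r (k + 1) • q ^ k, hw.mul_right ?_, ?_⟩
  · exact Commute.tsum_right t fun k => (htq.pow_right k).smul_right _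
  · rw [binomialSeries_sum_eq_one_add_mul hq₀, hqw, map_one, mul_assoc]

lemma IsScalarModMul.isUnit (ht : spectralRadius ℂ t = 0) {c : ℂ} {x : 𝔸}
    (hx : IsScalarModMul t c x) (hc : c ≠ 0) : IsUnit x := by
  obtain ⟨y, hy, rfl⟩ := hx
  exact isUnit_algebraMap_add_of_spectralRadius_eq_zero (hy.spectralRadius_mul_eq_zero ht) hc

lemma IsScalarModMul.eq_of_pow_eq_pow (ht : spectralRadius ℂ t = 0) {a : ℂ} {b c : 𝔸}
    (hb : IsScalarModMul t a b) (hc : IsScalarModMul t a c) (hbc : Commute b c) {n : ℕ}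
    (hn : n ≠ 0) (ha : a ≠ 0) (h : b ^ n = c ^ n) : b = c := by
  have hcancel : (∑ i ∈ range n, b ^ i * c ^ (n - 1 - i)) * (b - c) = 0 := by
    rw [hbc.geom_sum₂_mul, h, sub_self]
  have hsum : IsScalarModMul t (n * a ^ (n - 1)) (∑ i ∈ range n, b ^ i * c ^ (n - 1 - i)) := by
    have := IsScalarModMul.sum (range n) fun i _ => (hb.pow i).mul (hc.pow (n - 1 - i))
    rwa [sum_congr rfl fun i hi => by
      rw [← pow_add, Nat.add_sub_cancel' (Nat.le_sub_one_of_lt (mem_range.mp hi))],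
      sum_const, card_range, nsmul_eq_mul] at this
  rw [← sub_eq_zero, ← (hsum.isUnit ht (by simp [hn, ha])).mul_right_eq_zero]
  exact hcancel

theorem algebraMap_add_mem_elemental_pow (ht : spectralRadius ℂ t = 0) {a : ℂ} (ha : a ≠ 0)
    {n : ℕ} (hn : n ≠ 0) :
    algebraMap ℂ 𝔸 a + t ∈ Algebra.elemental ℂ ((algebraMap ℂ 𝔸 a + t) ^ n) := by
  set b := algebraMap ℂ 𝔸 a + t
  have hb : IsScalarModMul t a b := ⟨1, Commute.one_right t, by rw [mul_one]⟩
  obtain ⟨w, hw, hbn⟩ := hb.pow n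
  have ha' : a ^ n ≠ 0 := pow_ne_zero n ha
  set q := (a ^ n)⁻¹ • (b ^ n - algebraMap ℂ 𝔸 (a ^ n)) with hq_def
  have hq : IsScalarModMul t (0 : ℂ) q := ⟨(a ^ n)⁻¹ • w, hw.smul_right _, by
    rw [map_zero, zero_add, hq_def, hbn, add_sub_cancel_left, mul_smul_comm]⟩
  have hq₀ : spectralRadius ℂ q = 0 := by
    obtain ⟨y, hy, hqy⟩ := hq
    rw [hqy, map_zero, zero_add]
    exact hy.spectralRadius_mul_eq_zero ht
  set c := a • (binomialSeries 𝔸 (n : ℂ)⁻¹).sum q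
  have hc : IsScalarModMul t a c := by simpa using (hq.binomialSeries_sum hq₀ _).smul a
  have hcn : c ^ n = b ^ n := by
    rw [_root_.smul_pow, binomialSeries_inv_natCast_sum_pow hq₀ hn, smul_add, smul_smul,
      mul_inv_cancel₀ ha', one_smul, Algebra.smul_def, mul_one, add_sub_cancel]
  have hbc : Commute b c := (Algebra.commute_algebraMap_left a c).add_left hc.commute
  have hq_mem : q ∈ Algebra.elemental ℂ (b ^ n) := Subalgebra.smul_mem _
    (Subalgebra.sub_mem _ (Algebra.elemental.self_mem ℂ _) (Subalgebra.algebraMap_mem _ _)) _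
  rw [hb.eq_of_pow_eq_pow ht hc hbc hn ha hcn.symm, hcn]
  exact Subalgebra.smul_mem _ (binomialSeries_sum_mem (Algebra.elemental.isClosed ℂ _) hq_mem _) a

end BanachAlgebra

namespace Submodule

variable {𝕜 E : Type*} [NormedField 𝕜] [NormedAddCommGroup E] [NormedSpace 𝕜 E]

def invtSubalgebra_s1 (M : Submodule 𝕜 E) : Subalgebra 𝕜 (E →L[𝕜] E) where
  carrier := {T | ∀ x ∈ M, T x ∈ M}
  mul_mem' hS hT x hx := hS _ (hT x hx)
  add_mem' hS hT x hx := M.add_mem (hS x hx) (hT x hx)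
  algebraMap_mem' c x hx := by simpa [Algebra.algebraMap_eq_smul_one] using M.smul_mem c hx

lemma isClosed_invtSubalgebra_s1 {M : Submodule 𝕜 E} (hM : IsClosed (M : Set E)) :
    IsClosed (M.invtSubalgebra_s1 : Set (E →L[𝕜] E)) := by
  simp only [invtSubalgebra_s1, Subalgebra.coe_mk, Set.ofPred_forall]
  exact isClosed_biInter fun x _ => hM.preimage (continuous_eval_const x)

end Submodule

theorem stmt_1_general {E : Type*} [NormedAddCommGroup E] [NormedSpace ℂ E] [CompleteSpace E]
    (T : E →L[ℂ] E) (hT : spectrum ℂ T = {0}) (n : ℕ) (hn : 1 ≤ n)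
    (lam₀ : ℂ) (hlam₀ : lam₀ ≠ 0)
    (h : HasNontrivialClosedInvariantSubspace ((T - lam₀ • (1 : E →L[ℂ] E)) ^ n)) :
    HasNontrivialClosedInvariantSubspace T := by
  obtain ⟨M, hM_closed, hM_bot, hM_top, hM_inv⟩ := h
  have hT₀ : spectralRadius ℂ T = 0 := by simp [spectralRadius, hT]
  have hmem := algebraMap_add_mem_elemental_pow hT₀ (neg_ne_zero.mpr hlam₀)
    (Nat.one_le_iff_ne_zero.mp hn)
  rw [map_neg, Algebra.algebraMap_eq_smul_one, neg_add_eq_sub] at hmem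
  have hsub := Algebra.elemental.le_of_mem (M.isClosed_invtSubalgebra_s1 hM_closed) hM_inv hmem
  refine ⟨M, hM_closed, hM_bot, hM_top, fun x hx => ?_⟩
  simpa using M.add_mem (hsub x hx) (M.smul_mem lam₀ hx)

theorem stmt_1 {E : Type*} [NormedAddCommGroup E] [NormedSpace ℂ E] [CompleteSpace E]
    [TopologicalSpace.SeparableSpace E] (hdim : ¬ FiniteDimensional ℂ E)
    (T : E →L[ℂ] E) (hT : spectrum ℂ T = {0}) (n : ℕ) (hn : 1 ≤ n)
    (lam₀ : ℂ) (hlam₀ : lam₀ ≠ 0)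
    (h : HasNontrivialClosedInvariantSubspace ((T - lam₀ • (1 : E →L[ℂ] E)) ^ n)) :
    HasNontrivialClosedInvariantSubspace T :=
  stmt_1_general T hT n hn lam₀ hlam₀ h
end

section
/- Let X be an infinite dimensional separable complex Banach space, T a quasinilpotent bounded linear operator on X, and p a complex polynomial of degree n = deg(p) ≥ 2 such that the derivative p′ has a non-zero root of multiplicity n − 1. Then T has a nontrivial closed invariant subspace if and only if p(T) has a nontrivial closed invariant subspace. -/
open Polynomial

/-!
The condition on `p'` forces `p = a (X - λ)ⁿ + b`. With `S = 1 - λ⁻¹ T`, `p(T)` is an affine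
function of `Sⁿ`, so a closed `p(T)`-invariant subspace `M` is invariant under `Sⁿ = 1 + Q`, where
`Q` is quasinilpotent. The binomial series `(1 + Q) ^ (1 / n)` converges, is a limit of
polynomials in `Q`, and therefore leaves `M` invariant. It is an `n`-th root of `Sⁿ` of the form
`1 + (quasinilpotent)` commuting with `S`, and such roots are unique, so it equals `S`. Hence `M`
is invariant under `S`, and so under `T = λ (1 - S)`.
-/

open Filter Finset

section Quasinilpotent

variable {A : Type*} [NormedRing A]

/-- By Gelfand's formula this is equivalent to `spectralRadius ℂ q = 0`; the norm form is the one
the estimates below work with. -/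
def IsQuasinilpotent (q : A) : Prop :=
  ∀ ε : ℝ, 0 < ε → ∀ᶠ k in atTop, ‖q ^ k‖ ≤ ε ^ k

namespace IsQuasinilpotent

theorem exists_norm_pow_le {q : A} (h : IsQuasinilpotent q) {ε : ℝ} (hε : 0 < ε) :
    ∃ C, 0 ≤ C ∧ ∀ k, ‖q ^ k‖ ≤ C * ε ^ k := by
  obtain ⟨K, hK⟩ := eventually_atTop.mp (h ε hε)
  refine ⟨max 1 (∑ j ∈ range K, ‖q ^ j‖ / ε ^ j), by positivity, fun k => ?_⟩
  rcases lt_or_ge k K with hk | hk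
  · rw [← div_le_iff₀ (by positivity)]
    exact (single_le_sum (f := fun j => ‖q ^ j‖ / ε ^ j) (fun j _ => by positivity)
      (mem_range.mpr hk)).trans (le_max_right _ _)
  · exact (hK k hk).trans (le_mul_of_one_le_left (by positivity) (le_max_left _ _))

theorem of_norm_pow_le {q : A}
    (h : ∀ ε : ℝ, 0 < ε → ∃ C, ∀ᶠ k in atTop, ‖q ^ k‖ ≤ C * ε ^ k) : IsQuasinilpotent q := by
  intro ε hε
  obtain ⟨C, hC⟩ := h (ε / 2) (by positivity)
  have hgrow : ∀ᶠ k : ℕ in atTop, C ≤ 2 ^ k :=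
    (tendsto_pow_atTop_atTop_of_one_lt one_lt_two).eventually_ge_atTop C
  filter_upwards [hC, hgrow] with k hk hk2
  calc ‖q ^ k‖ ≤ C * (ε / 2) ^ k := hk
    _ ≤ 2 ^ k * (ε / 2) ^ k := by gcongr
    _ = ε ^ k := by rw [← mul_pow, mul_div_cancel₀ _ two_ne_zero]

theorem mul_of_commute {q z : A} (h : IsQuasinilpotent q) (hqz : Commute q z) :
    IsQuasinilpotent (q * z) := by
  refine of_norm_pow_le fun ε hε => ?_
  obtain ⟨C, -, hC⟩ := h.exists_norm_pow_le (show 0 < ε / (‖z‖ + 1) by positivity)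
  refine ⟨C, (eventually_gt_atTop 0).mono fun k hk => ?_⟩
  calc ‖(q * z) ^ k‖ ≤ ‖q ^ k‖ * ‖z‖ ^ k := by
        rw [hqz.mul_pow]
        exact (norm_mul_le _ _).trans (by gcongr; exact norm_pow_le' z hk)
    _ ≤ C * (ε / (‖z‖ + 1)) ^ k * (‖z‖ + 1) ^ k :=
        mul_le_mul (hC k) (pow_le_pow_left₀ (norm_nonneg z) (by linarith) k) (by positivity)
          ((norm_nonneg _).trans (hC k))
    _ = C * ε ^ k := by rw [mul_assoc, ← mul_pow, div_mul_cancel₀ _ (by positivity)]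

theorem add_of_commute {x y : A} (hx : IsQuasinilpotent x) (hy : IsQuasinilpotent y)
    (hxy : Commute x y) : IsQuasinilpotent (x + y) := by
  refine of_norm_pow_le fun ε hε => ?_
  obtain ⟨C, hC0, hC⟩ := hx.exists_norm_pow_le (half_pos hε)
  obtain ⟨D, hD0, hD⟩ := hy.exists_norm_pow_le (half_pos hε)
  refine ⟨C * D, Eventually.of_forall fun k => ?_⟩
  calc ‖(x + y) ^ k‖ ≤ ∑ m ∈ antidiagonal k, (k.choose m.1 : ℝ) * ‖x ^ m.1 * y ^ m.2‖ := by
        rw [hxy.add_pow']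
        exact (norm_sum_le _ _).trans (sum_le_sum fun m _ => norm_nsmul_le)
    _ ≤ ∑ m ∈ antidiagonal k,
          (k.choose m.1 : ℝ) * (C * (ε / 2) ^ m.1 * (D * (ε / 2) ^ m.2)) := by
        gcongr with m
        exact (norm_mul_le _ _).trans
          (mul_le_mul (hC _) (hD _) (norm_nonneg _) (by positivity))
    _ = C * D * (ε / 2 + ε / 2) ^ k := by
        rw [(Commute.all _ _).add_pow', mul_sum]
        refine sum_congr rfl fun m _ => ?_
        rw [nsmul_eq_mul]
        ring
    _ = C * D * ε ^ k := by rw [add_halves]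

theorem isUnit_one_sub [CompleteSpace A] {y : A} (h : IsQuasinilpotent y) :
    IsUnit (1 - y) := by
  obtain ⟨k, hk, hk0⟩ := ((h (1 / 2) one_half_pos).and (eventually_gt_atTop 0)).exists
  have hlt : ‖y ^ k‖ < 1 := hk.trans_lt (pow_lt_one₀ (by norm_num) (by norm_num) hk0.ne')
  have hcomm : Commute (1 - y) (∑ i ∈ range k, y ^ i) :=
    Commute.sum_right _ _ _ fun i _ =>
      (Commute.one_left _).sub_left ((Commute.refl y).pow_right i)
  exact (hcomm.isUnit_mul_iff.mp (mul_neg_geom_sum y k ▸ isUnit_one_sub_of_norm_lt_one hlt)).1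

variable [NormedAlgebra ℂ A]

theorem smul {q : A} (h : IsQuasinilpotent q) (c : ℂ) : IsQuasinilpotent (c • q) := by
  rw [Algebra.smul_def, Algebra.commutes]
  exact h.mul_of_commute (Algebra.commutes c q).symm

theorem neg {q : A} (h : IsQuasinilpotent q) : IsQuasinilpotent (-q) := by
  simpa using h.smul (-1)

theorem summable_norm_smul_pow {q : A} (h : IsQuasinilpotent q) {c : ℕ → ℂ} {C R : ℝ}
    (hR : 0 ≤ R) (hc : ∀ k, ‖c k‖ ≤ C * R ^ k) : Summable fun k => ‖c k • q ^ k‖ := by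
  have hC : 0 ≤ C := by simpa using (norm_nonneg _).trans (hc 0)
  obtain ⟨D, hD0, hD⟩ := h.exists_norm_pow_le (show 0 < (2 * (R + 1))⁻¹ by positivity)
  refine Summable.of_nonneg_of_le (fun k => norm_nonneg _) (fun k => ?_)
    (summable_geometric_two.mul_left (C * D))
  have hratio : R * (2 * (R + 1))⁻¹ ≤ 1 / 2 := by
    rw [← div_eq_mul_inv, div_le_iff₀ (by positivity)]
    linarith
  calc ‖c k • q ^ k‖ ≤ C * R ^ k * (D * (2 * (R + 1))⁻¹ ^ k) :=
        (norm_smul_le _ _).trans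
          (mul_le_mul (hc k) (hD k) (norm_nonneg _) ((norm_nonneg _).trans (hc k)))
    _ = C * D * (R * (2 * (R + 1))⁻¹) ^ k := by ring
    _ ≤ C * D * (1 / 2) ^ k := by gcongr

theorem of_spectralRadius_eq_zero [CompleteSpace A] {q : A} (h : spectralRadius ℂ q = 0) :
    IsQuasinilpotent q := by
  intro ε hε
  have hlim := spectrum.pow_norm_pow_one_div_tendsto_nhds_spectralRadius q
  rw [h] at hlim
  filter_upwards [hlim.eventually_lt_const (ENNReal.ofReal_pos.mpr hε), eventually_gt_atTop 0]
    with k hk hk0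
  rw [ENNReal.ofReal_lt_ofReal_iff hε, one_div,
    Real.rpow_inv_lt_iff_of_pos (norm_nonneg _) hε.le (by positivity), Real.rpow_natCast] at hk
  exact hk.le

/-- `∑_{i<n} cⁱ` kills `c - 1` and is `n (1 - y)` with `y` quasinilpotent, hence a unit. -/
theorem eq_one_of_pow_eq_one [CompleteSpace A] {c : A} (h : IsQuasinilpotent (c - 1)) {n : ℕ}
    (hn : n ≠ 0) (hc : c ^ n = 1) : c = 1 := by
  obtain ⟨P, hcP, hP⟩ : ∃ P : A, Commute (c - 1) P ∧ (c - 1) * P = ∑ i ∈ range n, c ^ i - n := by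
    refine ⟨∑ i ∈ range n, ∑ j ∈ range i, c ^ j, Commute.sum_right _ _ _ fun i _ =>
      Commute.sum_right _ _ _ fun j _ =>
        ((Commute.refl c).sub_left (Commute.one_left c)).pow_right j, ?_⟩
    rw [Finset.mul_sum, sum_congr rfl fun i _ => mul_geom_sum c i, sum_sub_distrib, sum_const,
      card_range, nsmul_one]
  set y := -((n : ℂ)⁻¹ • ((c - 1) * P))
  have hgeom : ∑ i ∈ range n, c ^ i = (n : ℂ) • (1 - y) := by
    rw [sub_neg_eq_add, smul_add, smul_smul, mul_inv_cancel₀ (Nat.cast_ne_zero.mpr hn), one_smul,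
      hP, Nat.cast_smul_eq_nsmul, nsmul_one, add_sub_cancel]
  have hzero : (1 - y) * (c - 1) = 0 := by
    have := geom_sum_mul c n
    rw [hc, sub_self, hgeom, smul_mul_assoc, smul_eq_zero] at this
    exact this.resolve_left (Nat.cast_ne_zero.mpr hn)
  exact sub_eq_zero.mp
    (((h.mul_of_commute hcP).smul _).neg.isUnit_one_sub.mul_right_eq_zero.mp hzero)

/-- Apply `eq_one_of_pow_eq_one` to `a b⁻¹`. -/
theorem eq_of_pow_eq [CompleteSpace A] {a b : A} (ha : IsQuasinilpotent (a - 1))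
    (hb : IsQuasinilpotent (b - 1)) (hab : Commute a b) {n : ℕ} (hn : n ≠ 0)
    (h : a ^ n = b ^ n) : a = b := by
  obtain ⟨u, rfl⟩ : IsUnit b := by simpa using hb.neg.isUnit_one_sub
  have hau : Commute a ↑u⁻¹ := hab.units_inv_right
  have hdiff : Commute (a - 1 + -(↑u - 1)) ↑u⁻¹ :=
    (hau.sub_left (Commute.one_left _)).add_left
      (((Commute.refl (u : A)).units_inv_right.sub_left (Commute.one_left _)).neg_left)
  have hQN : IsQuasinilpotent (a * ↑u⁻¹ - 1) := by
    have := (ha.add_of_commute hb.neg (hab.sub_left (Commute.one_left _) |>.sub_right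
      (Commute.one_right _) |>.neg_right)).mul_of_commute hdiff
    rwa [← sub_eq_add_neg, sub_sub_sub_cancel_right, sub_mul, Units.mul_inv] at this
  have hpow : (a * ↑u⁻¹) ^ n = 1 := by
    rw [hau.mul_pow, h, ← Units.val_pow_eq_pow_val, ← Units.val_pow_eq_pow_val, ← Units.val_mul,
      inv_pow, mul_inv_cancel, Units.val_one]
  exact Units.mul_inv_eq_one.mp (hQN.eq_one_of_pow_eq_one hn hpow)

end IsQuasinilpotent

end Quasinilpotent

theorem Complex.norm_ringChoose_le (r : ℂ) (k : ℕ) : ‖Ring.choose r k‖ ≤ (‖r‖ + 1) ^ k := by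
  induction k with
  | zero => simp
  | succ k ih =>
    have hrec : Ring.choose r (k + 1) * (k + 1) = Ring.choose r k * (r - k) := by
      have := Ring.choose_smul_choose r (Nat.le_add_right k 1)
      rw [Nat.choose_succ_self_right, Nat.add_sub_cancel_left, Ring.choose_one_right,
        nsmul_eq_mul] at this
      push_cast at this
      rw [← this, mul_comm]
    have hnorm : ‖Ring.choose r (k + 1)‖ * (k + 1) ≤ (‖r‖ + 1) ^ k * (‖r‖ + k) := by
      have := congrArg norm hrec
      rw [norm_mul, norm_mul, show ((k : ℂ) + 1) = ((k + 1 : ℕ) : ℂ) by push_cast; ring,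
        Complex.norm_natCast] at this
      push_cast at this
      rw [this]
      exact mul_le_mul ih ((norm_sub_le _ _).trans (by simp)) (norm_nonneg _) (by positivity)
    refine le_of_mul_le_mul_right (hnorm.trans ?_) (by positivity : (0 : ℝ) < k + 1)
    rw [pow_succ, mul_assoc]
    gcongr
    nlinarith [norm_nonneg r]

section Binomial

variable {A : Type*} [NormedRing A] [NormedAlgebra ℂ A]

/-- `(1 + q) ^ r`, defined by the binomial series. -/
noncomputable def binomialPow (q : A) (r : ℂ) : A :=
  ∑' k, Ring.choose r k • q ^ k

theorem binomialPow_natCast (q : A) (d : ℕ) : binomialPow q d = (1 + q) ^ d := by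
  have hvanish : ∀ k ∉ range (d + 1), Ring.choose (d : ℂ) k • q ^ k = 0 := fun k hk => by
    rw [Ring.choose_natCast, Nat.choose_eq_zero_of_lt (by simpa using hk), Nat.cast_zero,
      zero_smul]
  rw [binomialPow, tsum_eq_sum hvanish, add_comm 1 q, (Commute.one_right q).add_pow]
  refine sum_congr rfl fun k _ => ?_
  rw [Ring.choose_natCast, one_pow, mul_one, Nat.cast_smul_eq_nsmul, nsmul_eq_mul, Nat.cast_comm]

theorem Commute.binomialPow_right {a q : A} (h : Commute a q) (r : ℂ) :
    Commute a (binomialPow q r) :=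
  Commute.tsum_right _ fun k => (h.pow_right k).smul_right _

namespace IsQuasinilpotent

variable {q : A}

theorem summable_norm_binomial (h : IsQuasinilpotent q) (r : ℂ) :
    Summable fun k => ‖Ring.choose r k • q ^ k‖ :=
  h.summable_norm_smul_pow (C := 1) (R := ‖r‖ + 1) (by positivity) fun k => by
    simpa using Complex.norm_ringChoose_le r k

variable [CompleteSpace A]

theorem binomialPow_add (h : IsQuasinilpotent q) (r s : ℂ) :
    binomialPow q (r + s) = binomialPow q r * binomialPow q s := by
  rw [binomialPow, binomialPow, binomialPow,
    tsum_mul_tsum_eq_tsum_sum_antidiagonal_of_summable_norm (h.summable_norm_binomial r)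
      (h.summable_norm_binomial s)]
  refine tsum_congr fun k => ?_
  rw [Ring.add_choose_eq k (Commute.all r s), sum_smul]
  refine sum_congr rfl fun m hm => ?_
  rw [smul_mul_smul_comm, ← pow_add, HasAntidiagonal.mem_antidiagonal.mp hm]

theorem binomialPow_pow (h : IsQuasinilpotent q) (r : ℂ) (m : ℕ) :
    binomialPow q r ^ m = binomialPow q (m * r) := by
  induction m with
  | zero => simpa using (binomialPow_natCast q 0).symm
  | succ m ih => rw [pow_succ, ih, ← h.binomialPow_add, Nat.cast_succ, add_one_mul]

theorem binomialPow_sub_one (h : IsQuasinilpotent q) (r : ℂ) :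
    IsQuasinilpotent (binomialPow q r - 1) := by
  have htail : Summable fun k => Ring.choose r (k + 1) • q ^ k :=
    (h.summable_norm_smul_pow (C := ‖r‖ + 1) (R := ‖r‖ + 1) (by positivity) fun k => by
      simpa [pow_succ'] using Complex.norm_ringChoose_le r (k + 1)).of_norm
  have hsplit : binomialPow q r - 1 = q * ∑' k, Ring.choose r (k + 1) • q ^ k := by
    rw [binomialPow, (h.summable_norm_binomial r).of_norm.tsum_eq_zero_add, ← htail.tsum_mul_left]
    simp [pow_succ']
  rw [hsplit]
  exact h.mul_of_commute
    (Commute.tsum_right _ fun k => ((Commute.refl q).pow_right k).smul_right _)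

end IsQuasinilpotent

end Binomial

theorem Polynomial.exists_eq_C_mul_X_sub_C_pow_add_C {p : ℂ[X]} {n : ℕ} {lam : ℂ}
    (hdeg : p.natDegree = n) (hn : n ≠ 0) (hdvd : (X - C lam) ^ (n - 1) ∣ derivative p) :
    ∃ a b, a ≠ 0 ∧ p = C a * (X - C lam) ^ n + C b := by
  have hp' : derivative p = C (derivative p).leadingCoeff * (X - C lam) ^ (n - 1) :=
    eq_leadingCoeff_mul_of_monic_of_dvd_of_natDegree_le ((monic_X_sub_C lam).pow _) hdvd
      (by rw [natDegree_derivative, hdeg, natDegree_pow, natDegree_X_sub_C, mul_one])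
  set c := (derivative p).leadingCoeff
  have hc : c ≠ 0 := leadingCoeff_ne_zero.mpr fun h0 =>
    hn (hdeg ▸ derivative_eq_zero.mp h0)
  have hn' : (n : ℂ) ≠ 0 := Nat.cast_ne_zero.mpr hn
  refine ⟨c / n, (p - C (c / n) * (X - C lam) ^ n).coeff 0, div_ne_zero hc hn', ?_⟩
  have hconst : derivative (p - C (c / n) * (X - C lam) ^ n) = 0 := by
    rw [derivative_sub, derivative_C_mul, derivative_X_sub_C_pow, hp', ← mul_assoc, ← C_mul,
      div_mul_cancel₀ c hn', sub_self]
  linear_combination eq_C_of_derivative_eq_zero hconst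

namespace ContinuousLinearMap

variable {E : Type*} [NormedAddCommGroup E] [NormedSpace ℂ E] {M : Submodule ℂ E}

theorem aeval_apply_mem {T : E →L[ℂ] E} (hT : ∀ x ∈ M, T x ∈ M) (p : ℂ[X])
    {x : E} (hx : x ∈ M) : aeval T p x ∈ M := by
  induction p using Polynomial.induction_on generalizing x with
  | C c => simpa [Algebra.algebraMap_eq_smul_one] using M.smul_mem c hx
  | add p q hp hq => simpa using M.add_mem (hp hx) (hq hx)
  | monomial k c ih =>
    rw [pow_succ, ← mul_assoc, map_mul, aeval_X]
    exact ih (hT x hx)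

theorem binomialPow_apply_mem (hM : IsClosed (M : Set E)) {q : E →L[ℂ] E}
    (hq : ∀ x ∈ M, q x ∈ M) (r : ℂ) {x : E} (hx : x ∈ M) : binomialPow q r x ∈ M := by
  have hpow : ∀ k, ∀ y ∈ M, (q ^ k) y ∈ M := fun k => by
    induction k with
    | zero => simp
    | succ k ih => exact fun y hy => ih _ (hq y hy)
  by_cases hs : Summable fun k => Ring.choose r k • q ^ k
  · exact hM.mem_of_tendsto (hs.hasSum.mapL (apply ℂ E x)).tendsto_sum_nat
      (Eventually.of_forall fun m => M.sum_mem fun k _ => M.smul_mem _ (hpow k x hx))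
  · rw [binomialPow, tsum_eq_zero_of_not_summable hs]
    exact M.zero_mem

variable [CompleteSpace E]

theorem apply_mem_of_pow_apply_mem (hM : IsClosed (M : Set E)) {S : E →L[ℂ] E}
    (hS : IsQuasinilpotent (S - 1)) {n : ℕ} (hn : n ≠ 0) (hSn : ∀ x ∈ M, (S ^ n) x ∈ M)
    {x : E} (hx : x ∈ M) : S x ∈ M := by
  have hQ : IsQuasinilpotent (S ^ n - 1) := by
    rw [← mul_geom_sum]
    exact hS.mul_of_commute (Commute.sum_right _ _ _ fun i _ =>
      ((Commute.refl S).sub_left (Commute.one_left S)).pow_right i)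
  have hroot : binomialPow (S ^ n - 1) (n : ℂ)⁻¹ = S := by
    refine (hQ.binomialPow_sub_one _).eq_of_pow_eq hS
      ((((Commute.refl S).pow_right n).sub_right (Commute.one_right S)).binomialPow_right _).symm
      hn ?_
    rw [hQ.binomialPow_pow, mul_inv_cancel₀ (Nat.cast_ne_zero.mpr hn)]
    simpa using binomialPow_natCast (S ^ n - 1) 1
  rw [← hroot]
  exact binomialPow_apply_mem hM (fun y hy => M.sub_mem (hSn y hy) hy) _ hx

theorem apply_mem_of_aeval_apply_mem (hM : IsClosed (M : Set E)) {T : E →L[ℂ] E}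
    (hT : IsQuasinilpotent T) {lam a b : ℂ} (hlam : lam ≠ 0) (ha : a ≠ 0) {n : ℕ} (hn : n ≠ 0)
    (hp : ∀ x ∈ M, aeval T (C a * (X - C lam) ^ n + C b) x ∈ M) {x : E} (hx : x ∈ M) :
    T x ∈ M := by
  set S : E →L[ℂ] E := 1 - lam⁻¹ • T
  have hS : IsQuasinilpotent (S - 1) := by simpa [S] using hT.smul (-lam⁻¹)
  have haeval : aeval T (C a * (X - C lam) ^ n + C b) = (a * (-lam) ^ n) • S ^ n + b • 1 := by
    have hshift : T - lam • 1 = (-lam) • S := by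
      simp only [S, smul_sub, smul_smul, neg_mul, mul_inv_cancel₀ hlam, neg_smul, one_smul]
      abel
    simp only [map_add, map_mul, map_pow, map_sub, aeval_C, aeval_X,
      Algebra.algebraMap_eq_smul_one, hshift, _root_.smul_pow, smul_mul_assoc, one_mul, smul_smul]
  have hcoef : a * (-lam) ^ n ≠ 0 := mul_ne_zero ha (pow_ne_zero _ (neg_ne_zero.mpr hlam))
  have hSn : ∀ y ∈ M, (S ^ n) y ∈ M := fun y hy => by
    rw [(eq_inv_smul_iff₀ hcoef).mpr (eq_sub_of_add_eq haeval.symm)]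
    exact M.smul_mem _ (M.sub_mem (hp y hy) (M.smul_mem _ hy))
  have hTS : T = lam • (1 - S) := by simp [S, smul_smul, hlam]
  rw [hTS]
  exact M.smul_mem _ (M.sub_mem hx (apply_mem_of_pow_apply_mem hM hS hn hSn hx))

end ContinuousLinearMap

theorem stmt_2_general {E : Type*} [NormedAddCommGroup E] [NormedSpace ℂ E] [CompleteSpace E]
    (T : E →L[ℂ] E) (hT : spectrum ℂ T = {0}) (p : Polynomial ℂ) (n : ℕ)
    (hdeg : p.natDegree = n) (hn : 2 ≤ n)
    (hroot : ∃ lam : ℂ, lam ≠ 0 ∧ (X - C lam) ^ (n - 1) ∣ p.derivative ∧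
      ¬ (X - C lam) ^ n ∣ p.derivative) :
    HasNontrivialClosedInvariantSubspace T ↔
      HasNontrivialClosedInvariantSubspace (Polynomial.aeval T p) := by
  obtain ⟨lam, hlam, hdvd, -⟩ := hroot
  obtain ⟨a, b, ha, rfl⟩ := exists_eq_C_mul_X_sub_C_pow_add_C hdeg (by omega) hdvd
  have hTqn : IsQuasinilpotent T := .of_spectralRadius_eq_zero (by simp [spectralRadius, hT])
  constructor
  · rintro ⟨M, hMc, hM0, hMT, hMi⟩
    exact ⟨M, hMc, hM0, hMT, fun x hx => ContinuousLinearMap.aeval_apply_mem hMi _ hx⟩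
  · rintro ⟨M, hMc, hM0, hMT, hMi⟩
    exact ⟨M, hMc, hM0, hMT, fun x hx =>
      ContinuousLinearMap.apply_mem_of_aeval_apply_mem hMc hTqn hlam ha (by omega) hMi hx⟩

theorem stmt_2 {E : Type*} [NormedAddCommGroup E] [NormedSpace ℂ E] [CompleteSpace E]
    [TopologicalSpace.SeparableSpace E] (hdim : ¬ FiniteDimensional ℂ E)
    (T : E →L[ℂ] E) (hT : spectrum ℂ T = {0}) (p : Polynomial ℂ) (n : ℕ)
    (hdeg : p.natDegree = n) (hn : 2 ≤ n)
    (hroot : ∃ lam : ℂ, lam ≠ 0 ∧ (X - C lam) ^ (n - 1) ∣ p.derivative ∧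
      ¬ (X - C lam) ^ n ∣ p.derivative) :
    HasNontrivialClosedInvariantSubspace T ↔
      HasNontrivialClosedInvariantSubspace (Polynomial.aeval T p) :=
  stmt_2_general T hT p n hdeg hn hroot
end

section
/- Let X be an infinite dimensional separable complex Banach space and T a bounded linear operator on X. Then T has a nontrivial closed invariant subspace if and only if the operators A_T and A_{−T} on X × X have a common nontrivial closed invariant subspace, i.e., a closed subspace N of X × X with {0} ≠ N ≠ X × X that is invariant under both A_T and A_{−T}. -/
/-- The operator `A_T` on `E × E` given by `A_T (x, y) = (y, T x)`. -/
def AOp {E : Type*} [NormedAddCommGroup E] [NormedSpace ℂ E] (T : E →L[ℂ] E) :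
    (E × E) →L[ℂ] (E × E) :=
  (ContinuousLinearMap.snd ℂ E E).prod (T.comp (ContinuousLinearMap.fst ℂ E E))

/-!
Half the sum and half the difference of `A_T` and `A_{-T}` are `(x, y) ↦ (y, 0)` and
`(x, y) ↦ (0, T x)`, so a common invariant subspace `N` is invariant under both. Then
`Q = {y | (0, y) ∈ N}` is a closed `T`-invariant subspace, and `Q ≠ E` since otherwise `N`
would contain `E × 0` and `0 × E`. If `Q = 0`, then `T` kills both coordinates of every vector
of `N`, so `ker T ≠ 0`; then either `ker T` is nontrivial or `T = 0`, and for `T = 0` every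
line is invariant and is a proper subspace by infinite dimensionality.
-/

theorem exists_isClosed_ne_bot_ne_top {𝕜 E : Type*} [NontriviallyNormedField 𝕜]
    [CompleteSpace 𝕜] [NormedAddCommGroup E] [NormedSpace 𝕜 E]
    (hdim : ¬ FiniteDimensional 𝕜 E) :
    ∃ M : Submodule 𝕜 E, IsClosed (M : Set E) ∧ M ≠ ⊥ ∧ M ≠ ⊤ := by
  have : Nontrivial E := not_subsingleton_iff_nontrivial.mp fun _ => hdim inferInstance
  obtain ⟨x, hx⟩ := exists_ne (0 : E)
  refine ⟨𝕜 ∙ x, Submodule.closed_of_finiteDimensional _, ?_, fun h => ?_⟩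
  · simpa [Submodule.span_singleton_eq_bot] using hx
  · exact hdim (Module.finite_def.mpr (h ▸ Submodule.fg_span_singleton x))

namespace AOp

variable {E : Type*} [NormedAddCommGroup E] [NormedSpace ℂ E] (T : E →L[ℂ] E)

@[simp]
theorem apply (v : E × E) : AOp T v = (v.2, T v.1) := rfl

theorem prod_mem {M : Submodule ℂ E} (hM : ∀ x ∈ M, T x ∈ M) {v : E × E}
    (hv : v ∈ M.prod M) : AOp T v ∈ M.prod M :=
  ⟨hv.2, hM _ hv.1⟩

variable {T} {N : Submodule ℂ (E × E)}

theorem snd_zero_mem (hT : ∀ v ∈ N, AOp T v ∈ N) (hnegT : ∀ v ∈ N, AOp (-T) v ∈ N)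
    {x y : E} (h : (x, y) ∈ N) : (y, (0 : E)) ∈ N := by
  have hsum : (y, (0 : E)) = (2 : ℂ)⁻¹ • (AOp T (x, y) + AOp (-T) (x, y)) := by
    ext <;> simp [← two_smul ℂ y, smul_smul]
  exact hsum ▸ N.smul_mem _ (N.add_mem (hT _ h) (hnegT _ h))

theorem zero_apply_fst_mem (hT : ∀ v ∈ N, AOp T v ∈ N) (hnegT : ∀ v ∈ N, AOp (-T) v ∈ N)
    {x y : E} (h : (x, y) ∈ N) : ((0 : E), T x) ∈ N := by
  have hdiff : ((0 : E), T x) = (2 : ℂ)⁻¹ • (AOp T (x, y) - AOp (-T) (x, y)) := by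
    ext <;> simp [← two_smul ℂ (T x), smul_smul]
  exact hdiff ▸ N.smul_mem _ (N.sub_mem (hT _ h) (hnegT _ h))

theorem apply_mem_comap_inr (hT : ∀ v ∈ N, AOp T v ∈ N) (hnegT : ∀ v ∈ N, AOp (-T) v ∈ N)
    {y : E} (hy : y ∈ N.comap (LinearMap.inr ℂ E E)) :
    T y ∈ N.comap (LinearMap.inr ℂ E E) :=
  zero_apply_fst_mem hT hnegT (snd_zero_mem hT hnegT hy)

theorem comap_inr_ne_top (hT : ∀ v ∈ N, AOp T v ∈ N) (hnegT : ∀ v ∈ N, AOp (-T) v ∈ N)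
    (hN : N ≠ ⊤) : N.comap (LinearMap.inr ℂ E E) ≠ ⊤ := by
  refine fun h => hN (Submodule.eq_top_iff'.mpr fun ⟨x, y⟩ => ?_)
  have hx : ((0 : E), x) ∈ N := Submodule.eq_top_iff'.mp h x
  have hy : ((0 : E), y) ∈ N := Submodule.eq_top_iff'.mp h y
  simpa using N.add_mem (snd_zero_mem hT hnegT hx) hy

theorem le_prod_ker (hT : ∀ v ∈ N, AOp T v ∈ N) (hnegT : ∀ v ∈ N, AOp (-T) v ∈ N)
    (hQ : N.comap (LinearMap.inr ℂ E E) = ⊥) :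
    N ≤ (LinearMap.ker (T : E →ₗ[ℂ] E)).prod (LinearMap.ker (T : E →ₗ[ℂ] E)) := by
  rintro ⟨x, y⟩ h
  have hx : T x ∈ N.comap (LinearMap.inr ℂ E E) := zero_apply_fst_mem hT hnegT h
  have hy : T y ∈ N.comap (LinearMap.inr ℂ E E) :=
    zero_apply_fst_mem hT hnegT (snd_zero_mem hT hnegT h)
  rw [hQ, Submodule.mem_bot] at hx hy
  exact ⟨hx, hy⟩

end AOp

theorem stmt_13_general {E : Type*} [NormedAddCommGroup E] [NormedSpace ℂ E]
    (hdim : ¬ FiniteDimensional ℂ E)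
    (T : E →L[ℂ] E) :
    (∃ M : Submodule ℂ E, IsClosed (M : Set E) ∧ M ≠ ⊥ ∧ M ≠ ⊤ ∧ ∀ x ∈ M, T x ∈ M) ↔
      (∃ N : Submodule ℂ (E × E), IsClosed (N : Set (E × E)) ∧ N ≠ ⊥ ∧ N ≠ ⊤ ∧
        (∀ v ∈ N, AOp T v ∈ N) ∧ ∀ v ∈ N, AOp (-T) v ∈ N) := by
  constructor
  · rintro ⟨M, hMc, hMb, hMt, hM⟩
    refine ⟨M.prod M, hMc.prod hMc, by simp [Submodule.prod_eq_bot_iff, hMb],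
      by simp [Submodule.prod_eq_top_iff, hMt], fun _ => AOp.prod_mem T hM,
      fun _ => AOp.prod_mem (-T) fun x hx => ?_⟩
    simpa using M.neg_mem (hM x hx)
  rintro ⟨N, hNc, hNb, hNt, hT, hnegT⟩
  by_cases hQ : N.comap (LinearMap.inr ℂ E E) = ⊥
  · by_cases hker : LinearMap.ker (T : E →ₗ[ℂ] E) = ⊤
    · obtain ⟨M, hMc, hMb, hMt⟩ := exists_isClosed_ne_bot_ne_top hdim
      refine ⟨M, hMc, hMb, hMt, fun x _ => ?_⟩
      rw [show T x = 0 from Submodule.eq_top_iff'.mp hker x]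
      exact M.zero_mem
    refine ⟨LinearMap.ker (T : E →ₗ[ℂ] E), T.isClosed_ker, fun hbot => hNb ?_, hker,
      fun x hx => show T (T x) = 0 by rw [show T x = 0 from hx, map_zero]⟩
    simpa [hbot] using AOp.le_prod_ker hT hnegT hQ
  · exact ⟨_, hNc.preimage (Continuous.prodMk_right 0), hQ, AOp.comap_inr_ne_top hT hnegT hNt,
      fun y => AOp.apply_mem_comap_inr hT hnegT⟩

theorem stmt_13 {E : Type*} [NormedAddCommGroup E] [NormedSpace ℂ E] [CompleteSpace E]
    [TopologicalSpace.SeparableSpace E] (hdim : ¬ FiniteDimensional ℂ E)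
    (T : E →L[ℂ] E) :
    (∃ M : Submodule ℂ E, IsClosed (M : Set E) ∧ M ≠ ⊥ ∧ M ≠ ⊤ ∧ ∀ x ∈ M, T x ∈ M) ↔
      (∃ N : Submodule ℂ (E × E), IsClosed (N : Set (E × E)) ∧ N ≠ ⊥ ∧ N ≠ ⊤ ∧
        (∀ v ∈ N, AOp T v ∈ N) ∧ ∀ v ∈ N, AOp (-T) v ∈ N) :=
  stmt_13_general hdim T
end

section
/- Let X be an infinite dimensional separable complex Banach space and T a bounded linear operator on X. If A_T² has a nontrivial closed hyperinvariant subspace, then T has a nontrivial closed invariant subspace. -/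
theorem AOp_sq {E : Type*} [NormedAddCommGroup E] [NormedSpace ℂ E] (T : E →L[ℂ] E) :
    AOp T ^ 2 = T.prodMap T := by
  ext v <;> simp [pow_two, AOp]

namespace ContinuousLinearMap

variable {R E : Type*} [Semiring R] [TopologicalSpace E] [AddCommMonoid E] [Module R E]

def IsHyperinvariant (A : E →L[R] E) (N : Submodule R E) : Prop :=
  ∀ S : E →L[R] E, Commute S A → ∀ v ∈ N, S v ∈ N

theorem commute_swap_prodMap (T : E →L[R] E) :
    Commute ((snd R E E).prod (fst R E E)) (T.prodMap T) := by
  ext v <;> simp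

theorem _root_.Commute.inl_comp_fst_prodMap {U T : E →L[R] E} (h : Commute U T) :
    Commute ((inl R E E).comp (U.comp (fst R E E))) (T.prodMap T) := by
  ext x <;> simp
  exact DFunLike.congr_fun h.eq x

namespace IsHyperinvariant

variable {T : E →L[R] E} {N : Submodule R (E × E)} (hN : IsHyperinvariant (T.prodMap T) N)
include hN

theorem swap_mem {v : E × E} (hv : v ∈ N) : v.swap ∈ N :=
  hN _ (commute_swap_prodMap T) v hv

theorem apply_fst_mem {U : E →L[R] E} (hU : Commute U T) {v : E × E} (hv : v ∈ N) :
    (U v.1, 0) ∈ N := by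
  simpa using hN _ hU.inl_comp_fst_prodMap v hv

theorem fst_mem {v : E × E} (hv : v ∈ N) : (v.1, 0) ∈ N :=
  hN.apply_fst_mem (Commute.one_left T) hv

theorem snd_mem {v : E × E} (hv : v ∈ N) : (v.2, 0) ∈ N :=
  hN.fst_mem (hN.swap_mem hv)

theorem comap_inl_invariant {x : E} (hx : x ∈ N.comap (LinearMap.inl R E E)) :
    T x ∈ N.comap (LinearMap.inl R E E) := hN.apply_fst_mem (Commute.refl T) hx

theorem comap_inl_ne_bot (hbot : N ≠ ⊥) : N.comap (LinearMap.inl R E E) ≠ ⊥ := by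
  obtain ⟨v, hvN, hv⟩ := Submodule.exists_mem_ne_zero_of_ne_bot hbot
  rw [Submodule.ne_bot_iff]
  by_cases h1 : v.1 = 0
  · exact ⟨v.2, hN.snd_mem hvN, fun h2 => hv (Prod.ext h1 h2)⟩
  · exact ⟨v.1, hN.fst_mem hvN, h1⟩

theorem comap_inl_ne_top (htop : N ≠ ⊤) : N.comap (LinearMap.inl R E E) ≠ ⊤ := by
  intro hM
  refine htop (Submodule.eq_top_iff'.2 fun v => ?_)
  have h1 : (v.1, (0 : E)) ∈ N := Submodule.eq_top_iff'.1 hM v.1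
  have h2 : ((0 : E), v.2) ∈ N := hN.swap_mem (v := (v.2, 0)) (Submodule.eq_top_iff'.1 hM v.2)
  simpa using N.add_mem h1 h2

end IsHyperinvariant

end ContinuousLinearMap

theorem stmt_14_general {E : Type*} [NormedAddCommGroup E] [NormedSpace ℂ E]
    (T : E →L[ℂ] E)
    (h : ∃ N : Submodule ℂ (E × E), IsClosed (N : Set (E × E)) ∧ N ≠ ⊥ ∧ N ≠ ⊤ ∧
      ∀ S : (E × E) →L[ℂ] (E × E), S * (AOp T) ^ 2 = (AOp T) ^ 2 * S →
        ∀ v ∈ N, S v ∈ N) :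
    ∃ M : Submodule ℂ E, IsClosed (M : Set E) ∧ M ≠ ⊥ ∧ M ≠ ⊤ ∧ ∀ x ∈ M, T x ∈ M := by
  obtain ⟨N, hclosed, hbot, htop, hhyp⟩ := h
  have hN : ContinuousLinearMap.IsHyperinvariant (T.prodMap T) N := by rwa [← AOp_sq]
  exact ⟨N.comap (LinearMap.inl ℂ E E), hclosed.preimage (ContinuousLinearMap.inl ℂ E E).continuous,
    hN.comap_inl_ne_bot hbot, hN.comap_inl_ne_top htop, fun _ => hN.comap_inl_invariant⟩

theorem stmt_14 {E : Type*} [NormedAddCommGroup E] [NormedSpace ℂ E] [CompleteSpace E]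
    [TopologicalSpace.SeparableSpace E] (hdim : ¬ FiniteDimensional ℂ E)
    (T : E →L[ℂ] E)
    (h : ∃ N : Submodule ℂ (E × E), IsClosed (N : Set (E × E)) ∧ N ≠ ⊥ ∧ N ≠ ⊤ ∧
      ∀ S : (E × E) →L[ℂ] (E × E), S * (AOp T) ^ 2 = (AOp T) ^ 2 * S →
        ∀ v ∈ N, S v ∈ N) :
    ∃ M : Submodule ℂ E, IsClosed (M : Set E) ∧ M ≠ ⊥ ∧ M ≠ ⊤ ∧ ∀ x ∈ M, T x ∈ M :=
  stmt_14_general T h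
end
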